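/- With I_n defined by the recurrence I_0 = 1, I_1 = νw - 2αz - ξ, I_{n+1} = I_1·I_n + 2αn·I_{n-1}, the formal partial derivative of I_n with respect to z equals -2α·n·I_{n-1} for all n ≥ 1. -/
import Mathlib


open MvPolynomial

noncomputable def Ipoly (ν α ξ : ℂ) : ℕ → MvPolynomial (Fin 2) ℂ
  | 0 => 1
  | 1 => C ν * X 1 - C (2 * α) * X 0 - C ξ
  | (n + 2) => (C ν * X 1 - C (2 * α) * X 0 - C ξ) * Ipoly ν α ξ (n + 1)
      + C (2 * α * (n + 1)) * Ipoly ν α ξ n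

lemma base_pderiv (ν α ξ : ℂ) :
    pderiv 0 (C ν * X 1 - C (2 * α) * X 0 - C ξ : MvPolynomial (Fin 2) ℂ) = C (-2 * α) := by
  rw [map_sub, map_sub, pderiv_mul, pderiv_mul, pderiv_C, pderiv_C, pderiv_C, pderiv_X_self,
    pderiv_X_of_ne (show (1 : Fin 2) ≠ 0 by decide), neg_mul, map_neg]
  ring

lemma Ipoly_zero (ν α ξ : ℂ) : Ipoly ν α ξ 0 = 1 := by rw [Ipoly]

lemma Ipoly_one (ν α ξ : ℂ) :
    Ipoly ν α ξ 1 = C ν * X 1 - C (2 * α) * X 0 - C ξ := by rw [Ipoly]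

lemma Ipoly_add_two (ν α ξ : ℂ) (n : ℕ) :
    Ipoly ν α ξ (n + 2) = (C ν * X 1 - C (2 * α) * X 0 - C ξ) * Ipoly ν α ξ (n + 1)
      + C (2 * α * (n + 1)) * Ipoly ν α ξ n := by
  conv_lhs => rw [Ipoly]

lemma Ipoly_pderiv_aux (ν α ξ : ℂ) : ∀ n : ℕ,
    pderiv 0 (Ipoly ν α ξ (n + 1)) = C (-2 * α * (n + 1)) * Ipoly ν α ξ n
  | 0 => by
    rw [show (0:ℕ)+1 = 1 from rfl]
    conv_lhs => rw [Ipoly]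
    rw [base_pderiv, Ipoly]
    norm_num
  | 1 => by
    rw [show (1:ℕ)+1 = 0+2 from rfl, Ipoly_add_two,
      show (0:ℕ)+1 = 1 from rfl]
    rw [map_add, pderiv_mul, pderiv_mul, pderiv_C, Ipoly_zero, Ipoly_one, base_pderiv,
      Derivation.map_one_eq_zero]
    push_cast
    simp only [map_neg, map_mul, map_add, map_one, map_ofNat, map_natCast, map_zero]
    ring
  | (n + 2) => by
    have h1 := Ipoly_pderiv_aux ν α ξ (n + 1)
    have h0 := Ipoly_pderiv_aux ν α ξ n
    rw [show n+2+1 = (n+1)+2 from rfl, Ipoly_add_two, show n+1+1 = n+2 from rfl]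
    rw [map_add, pderiv_mul, pderiv_mul, pderiv_C, base_pderiv,
      show n+2 = n+1+1 from rfl, h1, h0, Ipoly_add_two]
    push_cast
    simp only [map_neg, map_mul, map_add, map_one, map_ofNat, map_natCast, map_zero]
    ring
  termination_by n => n

theorem stmt1 (ν α ξ : ℂ) (n : ℕ) (hn : 1 ≤ n) :
    pderiv 0 (Ipoly ν α ξ n) = C (-2 * α * n) * Ipoly ν α ξ (n - 1) := by
  obtain ⟨m, rfl⟩ := Nat.exists_eq_add_of_le hn
  have := Ipoly_pderiv_aux ν α ξ m
  rw [add_comm 1 m]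
  simpa using this
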